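/- arXiv:2410.20207 — 3 statements merged into one kernel-verified Lean document; each statement's English description precedes it below -/
import Mathlib

section
/- For real numbers x, with interpolation slope λ = u/(u−l) where l < 0 < u and l ≤ x ≤ u, the interpolated ReLU approximation satisfies λx − λl/2 − (−λl/2) ≤ ReLU(x) ≤ λx − λl/2 + (−λl/2), i.e., λx ≤ ReLU(x) ≤ λx − λl. -/
/-! The lower line `λx` is a convex combination of `x` and `0` when `0 ≤ λ ≤ 1`, so it lies below
`max 0 x`. The upper line `λ(x − l)` is the chord of ReLU over `[l, u]`; it is at least `0` for
`x ≥ l`, and at least `x` because `λ(x − l) − x = (1 − λ)(u − x)`. -/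

theorem mul_le_max_zero {lam x : ℝ} (hlam0 : 0 ≤ lam) (hlam1 : lam ≤ 1) :
    lam * x ≤ max 0 x := by
  rcases le_total 0 x with hx | hx
  · exact (mul_le_of_le_one_left hx hlam1).trans (le_max_right 0 x)
  · exact (mul_nonpos_of_nonneg_of_nonpos hlam0 hx).trans (le_max_left 0 x)

theorem max_zero_le_chord {lam l u x : ℝ} (hx : l ≤ x) (hxu : x ≤ u) (hlam0 : 0 ≤ lam)
    (hlam1 : lam ≤ 1) (hslope : lam * (u - l) = u) :
    max 0 x ≤ lam * (x - l) := by
  refine max_le (mul_nonneg hlam0 (sub_nonneg.2 hx)) ?_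
  have hgap : lam * (x - l) - x = (1 - lam) * (u - x) := by linear_combination hslope
  linarith [mul_nonneg (sub_nonneg.2 hlam1) (sub_nonneg.2 hxu)]

theorem relu_relaxation_sound (x l u lam : ℝ)
    (hl : l < 0) (hu : 0 < u) (hx : l ≤ x) (hxu : x ≤ u)
    (hlam : lam = u / (u - l)) :
    lam * x ≤ max 0 x ∧ max 0 x ≤ lam * x - lam * l := by
  have hd : 0 < u - l := by linarith
  have hslope : lam * (u - l) = u := by rw [hlam, div_mul_cancel₀ u hd.ne']
  have hlam0 : 0 ≤ lam := hlam ▸ div_nonneg hu.le hd.le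
  have hlam1 : lam ≤ 1 := by rw [hlam, div_le_one hd]; linarith
  rw [← mul_sub]
  exact ⟨mul_le_max_zero hlam0 hlam1, max_zero_le_chord hx hxu hlam0 hlam1 hslope⟩
end

section
/- For n ≥ 2 and δ ∈ [1/2, 1), the minimum of softmax(z)₁ over all z ∈ ℝⁿ satisfying z₁ − zⱼ ≥ ln(δ/(1−δ)) for all j ≥ 2 equals δ / (δ(2−n) + n − 1). Consequently the approximation error E(n, δ) := δ − δ/(δ(2−n)+n−1) satisfies E(2, δ) = 0. -/
theorem softmax_polytope_min (n : ℕ) (hn : 2 ≤ n) (δ : ℝ)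
    (hδ : δ ∈ Set.Ico (1 / 2 : ℝ) 1) :
    IsLeast
      {v : ℝ | ∃ z : Fin n → ℝ,
        (∀ j : Fin n, j ≠ ⟨0, by omega⟩ →
          z ⟨0, by omega⟩ - z j ≥ Real.log (δ / (1 - δ))) ∧
        v = Real.exp (z ⟨0, by omega⟩) / (∑ j, Real.exp (z j))}
      (δ / (δ * (2 - (n : ℝ)) + (n : ℝ) - 1)) ∧
    δ - δ / (δ * (2 - (2 : ℝ)) + (2 : ℝ) - 1) = 0 := by
  obtain ⟨hδ1, hδ2⟩ := hδ
  have hδ0 : 0 < δ := by linarith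
  have h1δ : 0 < 1 - δ := by linarith
  have hn' : (2 : ℝ) ≤ (n : ℝ) := by exact_mod_cast hn
  set i0 : Fin n := ⟨0, by omega⟩ with hi0
  set c : ℝ := Real.log (δ / (1 - δ)) with hc
  have hratio : 0 < δ / (1 - δ) := div_pos hδ0 h1δ
  have hexpc : Real.exp c = δ / (1 - δ) := Real.exp_log hratio
  have hD : 0 < δ * (2 - (n : ℝ)) + (n : ℝ) - 1 := by nlinarith
  have hcard : ((Finset.univ.erase i0).card : ℝ) = (n : ℝ) - 1 := by
    have : (Finset.univ.erase i0).card = n - 1 := by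
      rw [Finset.card_erase_of_mem (Finset.mem_univ _), Finset.card_univ, Fintype.card_fin]
    rw [this]
    have : (1 : ℕ) ≤ n := by omega
    push_cast [this]
    ring
  refine ⟨⟨⟨fun j => if j = i0 then c else 0, ?_, ?_⟩, ?_⟩, by ring⟩
  · intro j hj
    simp [hj]
  · have hsum : (∑ j, Real.exp (if j = i0 then c else 0))
        = Real.exp c + ((n : ℝ) - 1) := by
      rw [← Finset.add_sum_erase _ _ (Finset.mem_univ i0)]
      simp only [if_pos rfl]
      congr 1
      rw [Finset.sum_congr rfl (fun j hj => by
        rw [if_neg (Finset.ne_of_mem_erase hj), Real.exp_zero]),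
        Finset.sum_const, nsmul_eq_mul, mul_one, hcard]
    rw [hsum,
      show Real.exp ((fun j => if j = i0 then c else 0) i0) = Real.exp c from by simp, hexpc]
    have hS2 : 0 < δ / (1 - δ) + ((n : ℝ) - 1) := by
      have := hratio; linarith
    rw [div_eq_div_iff hD.ne' hS2.ne']
    field_simp
    ring
  · rintro v ⟨z, hz, rfl⟩
    set E := Real.exp (z i0) with hE
    have hEpos : 0 < E := Real.exp_pos _
    have hS : (∑ j, Real.exp (z j)) ≤ E * ((δ * (2 - (n : ℝ)) + (n : ℝ) - 1) / δ) := by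
      rw [← Finset.add_sum_erase _ _ (Finset.mem_univ i0)]
      have hbound : ∀ j ∈ Finset.univ.erase i0,
          Real.exp (z j) ≤ E * ((1 - δ) / δ) := by
        intro j hj
        have hj' := hz j (Finset.ne_of_mem_erase hj)
        have : z j ≤ z i0 - c := by linarith
        calc Real.exp (z j) ≤ Real.exp (z i0 - c) := Real.exp_le_exp.mpr this
          _ = E / Real.exp c := by rw [Real.exp_sub]
          _ = E * ((1 - δ) / δ) := by
              rw [hexpc]; field_simp
      have := Finset.sum_le_sum hbound
      rw [Finset.sum_const, nsmul_eq_mul, hcard] at this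
      have hgoal : E + ((n : ℝ) - 1) * (E * ((1 - δ) / δ))
          = E * ((δ * (2 - (n : ℝ)) + (n : ℝ) - 1) / δ) := by
        field_simp; ring
      linarith
    have hSpos : 0 < ∑ j, Real.exp (z j) := by
      apply Finset.sum_pos (fun j _ => Real.exp_pos _)
      exact ⟨i0, Finset.mem_univ _⟩
    rw [div_le_div_iff₀ hD hSpos]
    have : δ * (∑ j, Real.exp (z j)) ≤ δ * (E * ((δ * (2 - (n : ℝ)) + (n : ℝ) - 1) / δ)) :=
      mul_le_mul_of_nonneg_left hS (le_of_lt hδ0)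
    calc δ * (∑ j, Real.exp (z j))
        ≤ δ * (E * ((δ * (2 - (n : ℝ)) + (n : ℝ) - 1) / δ)) := this
      _ = E * (δ * (2 - (n : ℝ)) + (n : ℝ) - 1) := by field_simp
end

section
/- For n > 2, the maximum over δ ∈ [1/2, 1] of E(n, δ) = δ − δ/(δ(2−n)+n−1) is attained at δ* = (n − √(n−1) − 1)/(n−2), and this maximum value equals (n−2)/(√(n−1)+1)². -/
theorem softmax_error_max (n : ℕ) (hn : 2 < n) :
    ((n : ℝ) - Real.sqrt ((n : ℝ) - 1) - 1) / ((n : ℝ) - 2) ∈ Set.Icc (1 / 2 : ℝ) 1 ∧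
    IsMaxOn (fun δ : ℝ => δ - δ / (δ * (2 - (n : ℝ)) + (n : ℝ) - 1))
      (Set.Icc (1 / 2 : ℝ) 1)
      (((n : ℝ) - Real.sqrt ((n : ℝ) - 1) - 1) / ((n : ℝ) - 2)) ∧
    (fun δ : ℝ => δ - δ / (δ * (2 - (n : ℝ)) + (n : ℝ) - 1))
        (((n : ℝ) - Real.sqrt ((n : ℝ) - 1) - 1) / ((n : ℝ) - 2))
      = ((n : ℝ) - 2) / (Real.sqrt ((n : ℝ) - 1) + 1) ^ 2 := by
  have hn3 : (3 : ℝ) ≤ (n : ℝ) := by exact_mod_cast hn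
  set s := Real.sqrt ((n : ℝ) - 1) with hs
  have hs2 : s ^ 2 = (n : ℝ) - 1 := Real.sq_sqrt (by linarith)
  have hs1 : 1 < s := by
    nlinarith [Real.sqrt_nonneg ((n : ℝ) - 1), hs2]
  have hsp : (0:ℝ) < s + 1 := by linarith
  have hδ : ((n : ℝ) - s - 1) / ((n : ℝ) - 2) = s / (s + 1) := by
    rw [div_eq_div_iff (by linarith : ((n:ℝ)-2) ≠ 0) hsp.ne']
    nlinarith
  have hD : s / (s + 1) * (2 - (n : ℝ)) + (n : ℝ) - 1 = s := by
    field_simp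
    nlinarith
  have hval : s / (s + 1) - (s / (s + 1)) / (s / (s + 1) * (2 - (n : ℝ)) + (n : ℝ) - 1)
      = (s - 1) / (s + 1) := by
    rw [hD]
    field_simp
  refine ⟨?_, ?_, ?_⟩
  · rw [hδ, Set.mem_Icc]
    constructor
    · rw [le_div_iff₀ hsp]; linarith
    · rw [div_le_one hsp]; linarith
  · rw [isMaxOn_iff]
    intro x hx
    simp only [Set.mem_Icc] at hx
    simp only [hδ, hval]
    have hDx : 1 ≤ x * (2 - (n : ℝ)) + (n : ℝ) - 1 := by nlinarith
    have hDx0 : 0 < x * (2 - (n : ℝ)) + (n : ℝ) - 1 := by linarith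
    rw [show x - x / (x * (2 - (n : ℝ)) + (n : ℝ) - 1)
        = (x * (x * (2 - (n : ℝ)) + (n : ℝ) - 1) - x) / (x * (2 - (n : ℝ)) + (n : ℝ) - 1) by
      field_simp]
    rw [div_le_div_iff₀ hDx0 hsp]
    nlinarith [sq_nonneg (s - x * (s + 1)), hs1, hx.1, hx.2]
  · simp only [hδ, hval]
    rw [div_eq_div_iff hsp.ne' (by positivity : ((s+1)^2) ≠ 0)]
    nlinarith
end
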